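/- (Comparison of B' with B.) Let p > 1, κ ∈ [0,1] and 0 < γ ≤ Γ. Let B : [0,∞) → ℝ be continuous with B(0) = 0, continuously differentiable on (0,∞), and suppose γ (κ + t)^{p−2} t ≤ B'(t) ≤ Γ (κ + t)^{p−2} t for all t > 0. Then there exists a constant C > 0, depending only on p, γ and Γ, such that B'(t) t ≤ C B(t) for all t > 0. -/

import Mathlib

/-!
By the mean value theorem on `[t/2, t]`, and since `B` is nondecreasing with `B 0 = 0`,
`B t ≥ (t/2) · inf_{[t/2,t]} B'`. On that interval `κ + s` and `κ + t` differ by a factor at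
most `2`, so `(κ + s)^(p-2) ≥ min (2^(2-p)) 1 · (κ + t)^(p-2)`, whence
`B t ≳ γ (κ + t)^(p-2) t²`, while `B' t · t ≤ Γ (κ + t)^(p-2) t²`.
-/

open Set

theorem min_two_rpow_neg_one_mul_rpow_le_rpow (r : ℝ) {a b : ℝ} (ha : 0 < a) (hab : a ≤ b)
    (hb : b ≤ 2 * a) : min ((2 : ℝ) ^ (-r)) 1 * b ^ r ≤ a ^ r := by
  have hbr_nonneg : 0 ≤ b ^ r := Real.rpow_nonneg (ha.le.trans hab) r
  rcases le_total r 0 with hr | hr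
  · calc min ((2 : ℝ) ^ (-r)) 1 * b ^ r ≤ b ^ r :=
          mul_le_of_le_one_left hbr_nonneg (min_le_right _ _)
      _ ≤ a ^ r := Real.rpow_le_rpow_of_nonpos ha hab hr
  · calc min ((2 : ℝ) ^ (-r)) 1 * b ^ r ≤ 2 ^ (-r) * (2 * a) ^ r :=
          mul_le_mul (min_le_left _ _) (Real.rpow_le_rpow (by linarith) hb hr) hbr_nonneg
            (by positivity)
      _ = a ^ r := by
          rw [Real.mul_rpow zero_le_two ha.le, ← mul_assoc, ← Real.rpow_add two_pos,
            neg_add_cancel, Real.rpow_zero, one_mul]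

theorem mul_half_le_of_hasDerivAt {B B' : ℝ → ℝ} {t L : ℝ}
    (hBcont : ContinuousOn B (Ici 0)) (hB0 : B 0 = 0)
    (hBderiv : ∀ s, 0 < s → HasDerivAt B (B' s) s) (hB'nonneg : ∀ s, 0 < s → 0 ≤ B' s)
    (ht : 0 < t) (hL : ∀ s ∈ Ioo (t / 2) t, L ≤ B' s) : L * (t / 2) ≤ B t := by
  have hderiv : ∀ s ∈ Ioi (0 : ℝ), deriv B s = B' s := fun s hs => (hBderiv s hs).deriv
  have hdiff : DifferentiableOn ℝ B (Ioi 0) := fun s hs =>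
    (hBderiv s hs).differentiableAt.differentiableWithinAt
  have hIcc : Icc (t / 2) t ⊆ Ici 0 := fun s hs => le_trans (by positivity) hs.1
  have hIoo : Ioo (t / 2) t ⊆ Ioi 0 := fun s hs => lt_trans (by positivity) hs.1
  have hmono : MonotoneOn B (Ici 0) :=
    monotoneOn_of_deriv_nonneg (convex_Ici 0) hBcont (by rwa [interior_Ici])
      (fun s hs => by rw [interior_Ici] at hs; exact hderiv s hs ▸ hB'nonneg s hs)
  have hhalf : B 0 ≤ B (t / 2) := hmono self_mem_Ici (hIcc (left_mem_Icc.2 (by linarith)))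
    (by positivity)
  have hmvt : L * (t - t / 2) ≤ B t - B (t / 2) :=
    (convex_Icc (t / 2) t).mul_sub_le_image_sub_of_le_deriv (hBcont.mono hIcc)
      (by rw [interior_Icc]; exact hdiff.mono hIoo)
      (fun s hs => by rw [interior_Icc] at hs; exact hderiv s (hIoo hs) ▸ hL s hs)
      (t / 2) (left_mem_Icc.2 (by linarith)) t (right_mem_Icc.2 (by linarith)) (by linarith)
  linarith [show t - t / 2 = t / 2 by ring]

theorem deriv_mul_le_const_mul_self_general
    (p κ γ Γ : ℝ) (hκ0 : 0 ≤ κ) (hγ : 0 < γ) (hγΓ : γ ≤ Γ)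
    (B B' : ℝ → ℝ)
    (hBcont : ContinuousOn B (Set.Ici 0)) (hB0 : B 0 = 0)
    (hBderiv : ∀ t : ℝ, 0 < t → HasDerivAt B (B' t) t)
    (hbounds : ∀ t : ℝ, 0 < t →
      γ * (κ + t) ^ (p - 2) * t ≤ B' t ∧ B' t ≤ Γ * (κ + t) ^ (p - 2) * t) :
    ∃ C : ℝ, 0 < C ∧ ∀ t : ℝ, 0 < t → B' t * t ≤ C * B t := by
  set m : ℝ := min ((2 : ℝ) ^ (-(p - 2))) 1
  have hm : 0 < m := lt_min (Real.rpow_pos_of_pos two_pos _) one_pos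
  have hΓ : 0 < Γ := hγ.trans_le hγΓ
  refine ⟨4 * Γ / (γ * m), by positivity, fun t ht => ?_⟩
  have hκt : 0 < κ + t := by linarith
  have hlower : ∀ s ∈ Ioo (t / 2) t, γ * m * (κ + t) ^ (p - 2) * (t / 2) ≤ B' s := by
    rintro s ⟨hs₁, hs₂⟩
    have hκs : 0 < κ + s := by linarith
    have hweight : m * (κ + t) ^ (p - 2) ≤ (κ + s) ^ (p - 2) :=
      min_two_rpow_neg_one_mul_rpow_le_rpow _ (by linarith) (by linarith) (by linarith)
    calc γ * m * (κ + t) ^ (p - 2) * (t / 2) ≤ γ * (κ + s) ^ (p - 2) * s := by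
          rw [mul_assoc γ]; gcongr
      _ ≤ B' s := (hbounds s (by linarith)).1
  have hBt := mul_half_le_of_hasDerivAt hBcont hB0 hBderiv
    (fun s hs => le_trans (by positivity) (hbounds s hs).1) ht hlower
  calc B' t * t ≤ Γ * (κ + t) ^ (p - 2) * t * t := by gcongr; exact (hbounds t ht).2
    _ = 4 * Γ / (γ * m) * (γ * m * (κ + t) ^ (p - 2) * (t / 2) * (t / 2)) := by
        field_simp; ring
    _ ≤ 4 * Γ / (γ * m) * B t := by gcongr

/-- **Comparison of `B'` with `B`.**
Let `p > 1`, `κ ∈ [0,1]`, `0 < γ ≤ Γ`, and let `B : [0,∞) → ℝ` be continuous with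
`B 0 = 0`, continuously differentiable on `(0,∞)` with derivative `B'`, satisfying
`γ (κ + t)^(p−2) t ≤ B' t ≤ Γ (κ + t)^(p−2) t` for `t > 0`. Then there is `C > 0`
(depending only on `p, γ, Γ`) with `B' t * t ≤ C * B t` for all `t > 0`. -/
theorem deriv_mul_le_const_mul_self
    (p κ γ Γ : ℝ) (hp : 1 < p) (hκ0 : 0 ≤ κ) (hκ1 : κ ≤ 1) (hγ : 0 < γ) (hγΓ : γ ≤ Γ)
    (B B' : ℝ → ℝ)
    (hBcont : ContinuousOn B (Set.Ici 0)) (hB0 : B 0 = 0)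
    (hBderiv : ∀ t : ℝ, 0 < t → HasDerivAt B (B' t) t)
    (hB'cont : ContinuousOn B' (Set.Ioi 0))
    (hbounds : ∀ t : ℝ, 0 < t →
      γ * (κ + t) ^ (p - 2) * t ≤ B' t ∧ B' t ≤ Γ * (κ + t) ^ (p - 2) * t) :
    ∃ C : ℝ, 0 < C ∧ ∀ t : ℝ, 0 < t → B' t * t ≤ C * B t :=
  deriv_mul_le_const_mul_self_general p κ γ Γ hκ0 hγ hγΓ B B' hBcont hB0 hBderiv hbounds
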